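/- Let κ be a regular cardinal. If there exists a (κ,κ⁺)-cardinal μ, then the family T = {f_α ↾ ξ : α < κ⁺, ξ < κ}, where f_α : κ → κ is defined by f_α(ξ) = order type of μ_ξ(α), ordered by end-extension, is a κ-Kurepa tree: a subtree of κ^{<κ} of height κ with all levels of size < κ and at least κ⁺ many branches of length κ. -/

import Mathlib

open Set Cardinal Ordinal

noncomputable section

/-- Lower a (small) ordinal of `Ordinal.{1}` to `Ordinal.{0}` (the inverse of `Ordinal.lift`
on its range). -/
noncomputable def olower (o : Ordinal.{1}) : Ordinal.{0} :=
  sInf {a : Ordinal.{0} | Ordinal.lift.{1} a = o}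

/-- The order type of a set of ordinals. -/
noncomputable def otp (A : Set Ordinal.{0}) : Ordinal.{0} :=
  olower (Ordinal.type (Subrel ((· < ·) : Ordinal → Ordinal → Prop) (· ∈ A)))

/-- The canonical order-preserving transfer map from a set of ordinals `X` to a set of
ordinals `Y` of the same order type: an element `a ∈ X` is sent to the unique element of `Y`
occupying the same position. -/
noncomputable def omap (X Y : Set Ordinal) (a : Ordinal) : Ordinal :=
  sInf {b | b ∈ Y ∧ otp (Y ∩ Set.Iio b) = otp (X ∩ Set.Iio a)}

/-- `IsStar X₁ X₂ X` says `X = X₁ * X₂`: `X₁` and `X₂` have the same order type,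
`X = X₁ ∪ X₂`, and `X₁ ∩ X₂ < X₁ \ X₂ < X₂ \ X₁` elementwise. -/
def IsStar (X₁ X₂ X : Set Ordinal) : Prop :=
  otp X₁ = otp X₂ ∧ X = X₁ ∪ X₂ ∧
  (∀ a ∈ X₁ ∩ X₂, ∀ b ∈ X₁ \ X₂, a < b) ∧
  (∀ b ∈ X₁ \ X₂, ∀ c ∈ X₂ \ X₁, b < c)

set_option linter.deprecated false in
/-- A `(κ,κ⁺)`-cardinal (a neat simplified `(κ,1)`-morass presented as a family of sets):
a family `μ ⊆ ℘_κ(κ⁺)` which is well-founded under strict inclusion, locally small,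
homogeneous, directed, locally almost directed, covers `κ⁺` and is neat. -/
structure TwoCardinal (κ : Cardinal.{0}) where
  mu : Set (Set Ordinal)
  mem_sub : ∀ X ∈ mu, X ⊆ Set.Iio (Order.succ κ).ord
  mem_small : ∀ X ∈ mu, (otp X).card < κ
  wf : WellFounded fun X Y : mu => (X : Set Ordinal) ⊂ (Y : Set Ordinal)
  locSmall : ∀ X : mu,
    #{Z : mu // (Z : Set Ordinal) ⊂ (X : Set Ordinal)} < Cardinal.lift.{1} κ
  homog : ∀ X Y : mu, (wf.apply X).rank = (wf.apply Y).rank →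
    otp (X : Set Ordinal) = otp (Y : Set Ordinal) ∧
    {Z | Z ∈ mu ∧ Z ⊂ (Y : Set Ordinal)} =
      (fun Z => omap (X : Set Ordinal) (Y : Set Ordinal) '' Z) ''
        {Z | Z ∈ mu ∧ Z ⊂ (X : Set Ordinal)}
  directed : ∀ X ∈ mu, ∀ Y ∈ mu, ∃ Z ∈ mu, X ⊆ Z ∧ Y ⊆ Z
  locAlmostDirected : ∀ X : mu,
    (∀ Z₁ ∈ mu, ∀ Z₂ ∈ mu, Z₁ ⊂ (X : Set Ordinal) → Z₂ ⊂ (X : Set Ordinal) →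
      ∃ Z ∈ mu, Z ⊂ (X : Set Ordinal) ∧ Z₁ ⊆ Z ∧ Z₂ ⊆ Z) ∨
    (∃ X₁ X₂ : mu, (wf.apply X₁).rank = (wf.apply X₂).rank ∧
      IsStar (X₁ : Set Ordinal) (X₂ : Set Ordinal) (X : Set Ordinal) ∧
      {Z | Z ∈ mu ∧ Z ⊂ (X : Set Ordinal)} =
        {Z | Z ∈ mu ∧ Z ⊂ (X₁ : Set Ordinal)} ∪ {Z | Z ∈ mu ∧ Z ⊂ (X₂ : Set Ordinal)} ∪
          {(X₁ : Set Ordinal), (X₂ : Set Ordinal)})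
  covers : ⋃₀ mu = Set.Iio (Order.succ κ).ord
  neat : ∀ X : mu, (wf.apply X).rank ≠ 0 →
    (X : Set Ordinal) = ⋃₀ {Z | Z ∈ mu ∧ Z ⊂ (X : Set Ordinal)}

namespace TwoCardinal

variable {κ : Cardinal} (M : TwoCardinal κ)

set_option linter.deprecated false in
/-- The rank of an element of `μ` in the well-founded order `(μ, ⊂)`. -/
noncomputable def rank (X : M.mu) : Ordinal := olower ((M.wf.apply X).rank)

/-- The height of the well-founded order `(μ, ⊂)`. -/
noncomputable def ht : Ordinal := sSup (Set.range fun X : M.mu => M.rank X + 1)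

/-- The term `μ_ξ(α)` of the μ-sequence at `α`: equal to `X ∩ α` for any `X ∈ μ` of
rank `ξ` containing `α` (this is independent of the choice of `X`). -/
noncomputable def seq (α ξ : Ordinal) : Set Ordinal :=
  ⋃₀ {S | ∃ X : M.mu, M.rank X = ξ ∧ α ∈ (X : Set Ordinal) ∧
    S = (X : Set Ordinal) ∩ Set.Iio α}

/-- The μ-coloring `m(α,β) = min{rank X : α, β ∈ X ∈ μ}`. -/
noncomputable def mcol (a b : Ordinal) : Ordinal :=
  sInf {ξ | ∃ X : M.mu, M.rank X = ξ ∧ a ∈ (X : Set Ordinal) ∧ b ∈ (X : Set Ordinal)}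

end TwoCardinal

/-!
Everything rests on coherence: two members of `μ` of the same rank agree below each of their
common points. It is proved by induction on a common upper bound `W`, using local almost
directedness; when `W = X₁ * X₂`, a pair straddling the two halves is pulled back into `X₁` along
the homogeneity map `omap X₁ X₂`, which fixes their common initial segment. Coherence makes
`μ_ξ(α) = X ∩ α` for every `X` of rank `ξ` containing `α`, and then `omap X Y` carries
`f_α ↾ rank X` to `f_{omap X Y α} ↾ rank X`. So the `ξ`-th level is indexed by the fewer than
`κ` points of one `X` of rank `ξ`, while `α < β` in a common `X` give different values at
`rank X`, namely `otp (X ∩ α) < otp (X ∩ β)`.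
-/

section OrderType

variable {A : Set Ordinal.{0}}

theorem olower_lift (a : Ordinal.{0}) : olower (Ordinal.lift.{1} a) = a := by
  simp [olower, Ordinal.lift_inj]

theorem lift_otp (hA : BddAbove A) :
    Ordinal.lift.{1} (otp A) = type (Subrel ((· < ·) : Ordinal → Ordinal → Prop) (· ∈ A)) := by
  obtain ⟨b, hb⟩ := hA
  have hle : type (Subrel ((· < ·) : Ordinal → Ordinal → Prop) (· ∈ A)) ≤
      Ordinal.lift.{1} (Order.succ b) := by
    rw [← typein_ordinal, ← type_subrel]
    exact RelEmbedding.ordinal_type_le (RelEmbedding.codRestrict _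
      (Subrel.relEmbedding _ _) fun a => Order.lt_succ_iff.2 (hb a.2))
  obtain ⟨a, ha⟩ := mem_range_lift_of_le hle
  rw [otp, ← ha, olower_lift]

theorem lift_card_otp (hA : BddAbove A) : Cardinal.lift.{1} (otp A).card = #A := by
  rw [Ordinal.lift_card, lift_otp hA, card_type]

theorem lift_otp_inter_Iio (hA : BddAbove A) {a : Ordinal} (ha : a ∈ A) :
    Ordinal.lift.{1} (otp (A ∩ Iio a)) =
      typein (Subrel ((· < ·) : Ordinal → Ordinal → Prop) (· ∈ A)) ⟨a, ha⟩ := by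
  rw [lift_otp (hA.mono inter_subset_left), ← type_subrel]
  exact type_eq.2 ⟨RelIso.mk
    { toFun := fun x => ⟨⟨x.1, x.2.1⟩, x.2.2⟩
      invFun := fun x => ⟨x.1.1, x.1.2, x.2⟩
      left_inv := fun _ => rfl
      right_inv := fun _ => rfl } Iff.rfl⟩

theorem otp_inter_Iio_lt_otp (hA : BddAbove A) {a : Ordinal} (ha : a ∈ A) :
    otp (A ∩ Iio a) < otp A := by
  rw [← Ordinal.lift_lt.{1}, lift_otp_inter_Iio hA ha, lift_otp hA]
  exact typein_lt_type _ _

theorem strictMonoOn_otp_inter_Iio (hA : BddAbove A) :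
    StrictMonoOn (fun a => otp (A ∩ Iio a)) A := fun a ha b hb hab => by
  rw [← Ordinal.lift_lt.{1}, lift_otp_inter_Iio hA ha, lift_otp_inter_Iio hA hb]
  exact (typein_lt_typein _).2 hab

theorem exists_otp_inter_Iio_eq (hA : BddAbove A) {p : Ordinal} (hp : p < otp A) :
    ∃ a ∈ A, otp (A ∩ Iio a) = p := by
  rw [← Ordinal.lift_lt.{1}, lift_otp hA] at hp
  obtain ⟨⟨a, ha⟩, hap⟩ := typein_surj _ hp
  exact ⟨a, ha, Ordinal.lift_inj.1 ((lift_otp_inter_Iio hA ha).trans hap)⟩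

theorem otp_image_of_strictMonoOn {f : Ordinal → Ordinal} (hf : StrictMonoOn f A)
    (hA : BddAbove A) (hfA : BddAbove (f '' A)) : otp (f '' A) = otp A := by
  rw [← Ordinal.lift_inj.{1}, lift_otp hA, lift_otp hfA]
  exact (type_eq.2 ⟨hf.orderIso f A |>.toRelIsoLT⟩).symm

theorem StrictMonoOn.image_inter_Iio {α β : Type*} [LinearOrder α] [Preorder β] {f : α → β}
    {X S : Set α} (hf : StrictMonoOn f X) (hS : S ⊆ X) {a : α} (ha : a ∈ X) :
    f '' (S ∩ Iio a) = f '' S ∩ Iio (f a) := by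
  ext b
  constructor
  · rintro ⟨s, ⟨hs, hsa⟩, rfl⟩
    exact ⟨mem_image_of_mem f hs, hf (hS hs) ha hsa⟩
  · rintro ⟨⟨s, hs, rfl⟩, hsa⟩
    exact ⟨s, ⟨hs, (hf.lt_iff_lt (hS hs) ha).1 hsa⟩, rfl⟩

end OrderType

section Omap

variable {X Y : Set Ordinal.{0}}

theorem omap_spec (hX : BddAbove X) (hY : BddAbove Y) (hXY : otp X = otp Y) {a : Ordinal}
    (ha : a ∈ X) : omap X Y a ∈ Y ∧ otp (Y ∩ Iio (omap X Y a)) = otp (X ∩ Iio a) := by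
  obtain ⟨b, hb, hba⟩ := exists_otp_inter_Iio_eq hY (hXY ▸ otp_inter_Iio_lt_otp hX ha)
  exact csInf_mem (s := {b | b ∈ Y ∧ otp (Y ∩ Iio b) = otp (X ∩ Iio a)}) ⟨b, hb, hba⟩

theorem omap_eq_of_otp_eq (hY : BddAbove Y) {a b : Ordinal} (hb : b ∈ Y)
    (h : otp (Y ∩ Iio b) = otp (X ∩ Iio a)) : omap X Y a = b := by
  have : {c | c ∈ Y ∧ otp (Y ∩ Iio c) = otp (X ∩ Iio a)} = {b} := by
    ext c
    refine ⟨fun hc => (strictMonoOn_otp_inter_Iio hY).injOn hc.1 hb (hc.2.trans h.symm), ?_⟩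
    rintro rfl
    exact ⟨hb, h⟩
  rw [omap, this, csInf_singleton]

theorem omap_eq_self (hY : BddAbove Y) {a : Ordinal} (ha : a ∈ Y)
    (h : X ∩ Iio a = Y ∩ Iio a) : omap X Y a = a :=
  omap_eq_of_otp_eq hY ha (by rw [h])

theorem omap_mapsTo (hX : BddAbove X) (hY : BddAbove Y) (hXY : otp X = otp Y) :
    MapsTo (omap X Y) X Y :=
  fun _ ha => (omap_spec hX hY hXY ha).1

theorem omap_strictMonoOn (hX : BddAbove X) (hY : BddAbove Y) (hXY : otp X = otp Y) :
    StrictMonoOn (omap X Y) X := fun a ha b hb hab => by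
  have h : otp (X ∩ Iio a) < otp (X ∩ Iio b) := strictMonoOn_otp_inter_Iio hX ha hb hab
  rw [← (omap_spec hX hY hXY ha).2, ← (omap_spec hX hY hXY hb).2] at h
  exact ((strictMonoOn_otp_inter_Iio hY).lt_iff_lt (omap_mapsTo hX hY hXY ha)
    (omap_mapsTo hX hY hXY hb)).1 h

theorem otp_image_omap (hX : BddAbove X) (hY : BddAbove Y) (hXY : otp X = otp Y)
    {S : Set Ordinal} (hS : S ⊆ X) : otp (omap X Y '' S) = otp S :=
  otp_image_of_strictMonoOn ((omap_strictMonoOn hX hY hXY).mono hS) (hX.mono hS)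
    (hY.mono ((omap_mapsTo hX hY hXY).mono_left hS).image_subset)

end Omap

theorem IsWellFounded.exists_rel_rank_eq {α : Type*} {r : α → α → Prop} [IsWellFounded α r]
    [IsTrans α r] {a : α} {o : Ordinal} (h : o < rank r a) : ∃ b, r b a ∧ rank r b = o := by
  induction a using IsWellFounded.induction r with
  | _ a IH =>
    rw [rank_eq, Ordinal.lt_iSup_iff] at h
    obtain ⟨⟨b, hb⟩, hob⟩ := h
    rcases (Order.lt_succ_iff.1 hob).eq_or_lt with rfl | hlt
    · exact ⟨b, hb, rfl⟩
    · obtain ⟨c, hc, rfl⟩ := IH b hb hlt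
      exact ⟨c, _root_.trans hc hb, rfl⟩

theorem IsWellFounded.rank_le_rank_of_forall_exists {α : Type*} {r : α → α → Prop}
    [IsWellFounded α r] {a b : α} (h : ∀ c, r c a → ∃ d, r d b ∧ rank r c ≤ rank r d) :
    rank r a ≤ rank r b := by
  rw [rank_eq r a]
  refine Ordinal.iSup_le fun ⟨c, hc⟩ => ?_
  obtain ⟨d, hd, hcd⟩ := h c hc
  exact Order.succ_le_of_lt (hcd.trans_lt (rank_lt_of_rel hd))

def Coherent (A B : Set Ordinal) : Prop := ∀ a ∈ A ∩ B, A ∩ Iio a = B ∩ Iio a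

theorem Coherent.refl (A : Set Ordinal) : Coherent A A := fun _ _ => rfl

theorem Coherent.symm {A B : Set Ordinal} (h : Coherent A B) : Coherent B A :=
  fun a ha => (h a ⟨ha.2, ha.1⟩).symm

theorem IsStar.coherent {X₁ X₂ X : Set Ordinal} (h : IsStar X₁ X₂ X)
    (hne : (X₁ \ X₂).Nonempty) : Coherent X₁ X₂ := by
  obtain ⟨-, -, h₁, h₂⟩ := h
  obtain ⟨b, hb⟩ := hne
  intro a ha
  ext x
  refine ⟨fun ⟨hx, hxa⟩ => ⟨?_, hxa⟩, fun ⟨hx, hxa⟩ => ⟨?_, hxa⟩⟩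
  · by_contra hx₂
    exact (h₁ a ha x ⟨hx, hx₂⟩).not_gt hxa
  · by_contra hx₁
    exact ((h₁ a ha b hb).trans (h₂ b hb x ⟨hx, hx₁⟩)).not_gt hxa

namespace TwoCardinal

variable {κ : Cardinal.{0}} {M : TwoCardinal κ}

instance : WellFoundedLT M.mu := ⟨M.wf⟩

instance : IsDirectedOrder M.mu :=
  ⟨fun X Y => by
    obtain ⟨Z, hZ, hXZ, hYZ⟩ := M.directed X X.2 Y Y.2
    exact ⟨⟨Z, hZ⟩, hXZ, hYZ⟩⟩

variable (M) in
abbrev wfRank (X : M.mu) : Ordinal.{1} := IsWellFounded.rank (· < ·) X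

theorem wfRank_lt_wfRank {X Y : M.mu} (h : X < Y) : M.wfRank X < M.wfRank Y :=
  WellFoundedLT.rank_strictMono h

theorem wfRank_le_wfRank {X Y : M.mu} (h : X ≤ Y) : M.wfRank X ≤ M.wfRank Y :=
  WellFoundedLT.rank_strictMono.monotone h

theorem eq_of_le_of_wfRank_le {X Y : M.mu} (h : X ≤ Y) (h' : M.wfRank Y ≤ M.wfRank X) : X = Y :=
  h.eq_or_lt.resolve_right fun hlt => (wfRank_lt_wfRank hlt).not_ge h'

theorem bddAbove (X : M.mu) : BddAbove (X : Set Ordinal) :=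
  ⟨_, fun _ h => (M.mem_sub X X.2 h).le⟩

theorem exists_mem {α : Ordinal} (hα : α < (Order.succ κ).ord) :
    ∃ X : M.mu, α ∈ (X : Set Ordinal) := by
  obtain ⟨X, hX, hαX⟩ := (M.covers ▸ hα : α ∈ ⋃₀ M.mu)
  exact ⟨⟨X, hX⟩, hαX⟩

theorem exists_mem_mem {α β : Ordinal} (hα : α < (Order.succ κ).ord)
    (hβ : β < (Order.succ κ).ord) :
    ∃ X : M.mu, α ∈ (X : Set Ordinal) ∧ β ∈ (X : Set Ordinal) := by
  obtain ⟨X, hαX⟩ := exists_mem (M := M) hα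
  obtain ⟨Y, hβY⟩ := exists_mem (M := M) hβ
  obtain ⟨Z, hXZ, hYZ⟩ := exists_ge_ge X Y
  exact ⟨Z, hXZ hαX, hYZ hβY⟩

theorem exists_lt_mem {W : M.mu} (hW : M.wfRank W ≠ 0) {α : Ordinal}
    (hα : α ∈ (W : Set Ordinal)) : ∃ Y < W, α ∈ (Y : Set Ordinal) := by
  obtain ⟨Y, ⟨hY, hYW⟩, hαY⟩ := (M.neat W hW ▸ hα : α ∈ ⋃₀ {Z | Z ∈ M.mu ∧ Z ⊂ W})
  exact ⟨⟨Y, hY⟩, hYW, hαY⟩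

section Homogeneity

variable {X Y : M.mu}

theorem otp_eq_of_wfRank_eq (h : M.wfRank X = M.wfRank Y) :
    otp (X : Set Ordinal) = otp (Y : Set Ordinal) :=
  (M.homog X Y h).1

theorem exists_image_omap_eq_of_lt (h : M.wfRank X = M.wfRank Y) {S : M.mu} (hS : S < X) :
    ∃ T < Y, (T : Set Ordinal) = omap X Y '' S := by
  obtain ⟨hT, hTY⟩ : omap X Y '' S ∈ {Z | Z ∈ M.mu ∧ Z ⊂ (Y : Set Ordinal)} := by
    rw [(M.homog X Y h).2]
    exact ⟨S, ⟨S.2, hS⟩, rfl⟩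
  exact ⟨⟨_, hT⟩, hTY, rfl⟩

theorem exists_eq_image_omap_of_lt (h : M.wfRank X = M.wfRank Y) {T : M.mu} (hT : T < Y) :
    ∃ S < X, (T : Set Ordinal) = omap X Y '' S := by
  obtain ⟨S, ⟨hS, hSX⟩, hST⟩ : (T : Set Ordinal) ∈
      (fun Z => omap X Y '' Z) '' {Z | Z ∈ M.mu ∧ Z ⊂ (X : Set Ordinal)} :=
    (M.homog X Y h).2 ▸ ⟨T.2, hT⟩
  exact ⟨⟨S, hS⟩, hSX, hST.symm⟩

theorem image_omap_lt_image_omap_iff (h : M.wfRank X = M.wfRank Y) {S S' : M.mu} (hS : S ≤ X)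
    (hS' : S' ≤ X) : omap X Y '' S < omap X Y '' S' ↔ S < S' :=
  (omap_strictMonoOn (M.bddAbove X) (M.bddAbove Y)
    (otp_eq_of_wfRank_eq h)).injOn.image_ssubset_image_iff hS hS'

theorem wfRank_eq_of_eq_image_omap (h : M.wfRank X = M.wfRank Y) {S : M.mu} (hS : S < X)
    {T : M.mu} (hT : (T : Set Ordinal) = omap X Y '' S) : M.wfRank T = M.wfRank S := by
  induction S using WellFoundedLT.induction generalizing T with
  | _ S IH =>
    have hTY : T < Y := by
      obtain ⟨T', hT'Y, hT'⟩ := exists_image_omap_eq_of_lt h hS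
      rwa [← Subtype.ext (hT'.trans hT.symm)]
    apply le_antisymm <;> refine IsWellFounded.rank_le_rank_of_forall_exists fun R hR => ?_
    · obtain ⟨R', hR'X, hR'⟩ := exists_eq_image_omap_of_lt h (hR.trans hTY)
      have hR'S : R' < S := by
        rw [← image_omap_lt_image_omap_iff h hR'X.le hS.le, ← hR', ← hT]
        exact hR
      exact ⟨R', hR'S, (IH R' hR'S hR'X hR').le⟩
    · obtain ⟨R', hR'Y, hR'⟩ := exists_image_omap_eq_of_lt h (hR.trans hS)
      have hR'T : R' < T := by
        change (R' : Set Ordinal) < T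
        rw [hR', hT, image_omap_lt_image_omap_iff h (hR.trans hS).le hS.le]
        exact hR
      exact ⟨R', hR'T, (IH R hR (hR.trans hS) hR').ge⟩

end Homogeneity

-- `W = X₁ * X₂`, the second alternative of local almost directedness.
structure IsSplit (W X₁ X₂ : M.mu) : Prop where
  wfRank_eq : M.wfRank X₁ = M.wfRank X₂
  coherent : Coherent X₁ X₂
  union_eq : (W : Set Ordinal) = (X₁ : Set Ordinal) ∪ X₂
  left_lt : X₁ < W
  right_lt : X₂ < W
  le_or_le : ∀ Z < W, Z ≤ X₁ ∨ Z ≤ X₂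

theorem directed_or_isSplit (W : M.mu) :
    (∀ Z₁ < W, ∀ Z₂ < W, ∃ V < W, Z₁ ≤ V ∧ Z₂ ≤ V) ∨ ∃ X₁ X₂, IsSplit W X₁ X₂ := by
  rcases M.locAlmostDirected W with hdir | ⟨X₁, X₂, hrank, hstar, hlt⟩
  · left
    intro Z₁ hZ₁ Z₂ hZ₂
    obtain ⟨V, hV, hVW, hZ₁V, hZ₂V⟩ := hdir Z₁ Z₁.2 Z₂ Z₂.2 hZ₁ hZ₂
    exact ⟨⟨V, hV⟩, hVW, hZ₁V, hZ₂V⟩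
  · right
    have hlt_iff : ∀ Z : M.mu, Z < W ↔ (Z : Set Ordinal) ∈
        {Z | Z ∈ M.mu ∧ Z ⊂ (X₁ : Set Ordinal)} ∪ {Z | Z ∈ M.mu ∧ Z ⊂ (X₂ : Set Ordinal)} ∪
          {(X₁ : Set Ordinal), (X₂ : Set Ordinal)} := fun Z => by
      rw [← hlt]
      exact ⟨fun h => ⟨Z.2, h⟩, And.right⟩
    have hX₁ : X₁ < W := (hlt_iff X₁).2 (Or.inr (Or.inl rfl))
    have hX₂ : X₂ < W := (hlt_iff X₂).2 (Or.inr (Or.inr rfl))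
    have hne : ((X₁ : Set Ordinal) \ X₂).Nonempty := by
      rw [nonempty_iff_ne_empty, Ne, sdiff_eq_empty]
      intro h
      exact hX₂.ne (Subtype.ext (by rw [hstar.2.1, union_eq_self_of_subset_left h]))
    refine ⟨X₁, X₂, hrank, hstar.coherent hne, hstar.2.1, hX₁, hX₂, fun Z hZ => ?_⟩
    rcases (hlt_iff Z).1 hZ with (⟨-, h⟩ | ⟨-, h⟩) | h | h
    · exact Or.inl h.le
    · exact Or.inr h.le
    · exact Or.inl (Subtype.ext h).le
    · exact Or.inr (Subtype.ext h).le

-- `S` is the preimage of `Z` under `omap A B`, which fixes every point of `A` up to `α`.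
theorem exists_le_inter_Iio_eq {A B Z : M.mu} (hAB : M.wfRank A = M.wfRank B)
    (hcoh : Coherent A B) (hZB : Z ≤ B) {α : Ordinal} (hαA : α ∈ (A : Set Ordinal))
    (hαZ : α ∈ (Z : Set Ordinal)) :
    ∃ S ≤ A, M.wfRank S = M.wfRank Z ∧ α ∈ (S : Set Ordinal) ∧
      (S : Set Ordinal) ∩ Iio α = (Z : Set Ordinal) ∩ Iio α := by
  rcases hZB.eq_or_lt with rfl | hZB
  · exact ⟨A, le_rfl, hAB, hαA, hcoh α ⟨hαA, hαZ⟩⟩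
  obtain ⟨S, hSA, hSZ⟩ := exists_eq_image_omap_of_lt hAB hZB
  set f := omap (A : Set Ordinal) B
  have hmono : StrictMonoOn f A :=
    omap_strictMonoOn (M.bddAbove A) (M.bddAbove B) (otp_eq_of_wfRank_eq hAB)
  have hfix : ∀ x ∈ (A : Set Ordinal) ∩ B, f x = x :=
    fun x hx => omap_eq_self (M.bddAbove B) hx.2 (hcoh x hx)
  have hαB : α ∈ (B : Set Ordinal) := hZB.le hαZ
  have hαS : α ∈ (S : Set Ordinal) := by
    obtain ⟨s, hs, hsα⟩ := (hSZ ▸ hαZ : α ∈ f '' S)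
    rwa [← hmono.injOn (hSA.le hs) hαA (hsα.trans (hfix α ⟨hαA, hαB⟩).symm)]
  refine ⟨S, hSA.le, (wfRank_eq_of_eq_image_omap hAB hSA hSZ).symm, hαS, ?_⟩
  have hid : EqOn f id ((S : Set Ordinal) ∩ Iio α) := fun x ⟨hxS, hxα⟩ =>
    hfix x ⟨hSA.le hxS, ((hcoh α ⟨hαA, hαB⟩).subset ⟨hSA.le hxS, hxα⟩).1⟩
  rw [← hid.image_eq_self, hmono.image_inter_Iio hSA.le hαA, hfix α ⟨hαA, hαB⟩, hSZ]

theorem coherent_of_le_of_le (W : M.mu) :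
    ∀ X Z : M.mu, X ≤ W → Z ≤ W → M.wfRank X = M.wfRank Z → Coherent X Z := by
  induction W using WellFoundedLT.induction with
  | _ W IH =>
    intro X Z hXW hZW hXZ
    rcases hXW.eq_or_lt with rfl | hXW
    · rw [← eq_of_le_of_wfRank_le hZW hXZ.le]
      exact Coherent.refl _
    rcases hZW.eq_or_lt with rfl | hZW
    · rw [eq_of_le_of_wfRank_le hXW.le hXZ.ge]
      exact Coherent.refl _
    rcases M.directed_or_isSplit W with hdir | ⟨X₁, X₂, hs⟩
    · obtain ⟨V, hVW, hXV, hZV⟩ := hdir X hXW Z hZW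
      exact IH V hVW X Z hXV hZV hXZ
    have cross : ∀ {A B : M.mu}, A < W → M.wfRank A = M.wfRank B → Coherent A B →
        ∀ {X Z : M.mu}, X ≤ A → Z ≤ B → M.wfRank X = M.wfRank Z → Coherent X Z := by
      intro A B hAW hAB hcoh X Z hXA hZB hXZ α ⟨hαX, hαZ⟩
      obtain ⟨S, hSA, hSZ, hαS, hS⟩ := exists_le_inter_Iio_eq hAB hcoh hZB (hXA hαX) hαZ
      rw [IH A hAW X S hXA hSA (hXZ.trans hSZ.symm) α ⟨hαX, hαS⟩, hS]
    rcases hs.le_or_le X hXW with hX | hX <;> rcases hs.le_or_le Z hZW with hZ | hZ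
    · exact IH X₁ hs.left_lt X Z hX hZ hXZ
    · exact cross hs.left_lt hs.wfRank_eq hs.coherent hX hZ hXZ
    · exact cross hs.right_lt hs.wfRank_eq.symm hs.coherent.symm hX hZ hXZ
    · exact IH X₂ hs.right_lt X Z hX hZ hXZ

theorem coherent_of_wfRank_eq {X Z : M.mu} (h : M.wfRank X = M.wfRank Z) : Coherent X Z :=
  let ⟨W, hXW, hZW⟩ := exists_ge_ge X Z
  coherent_of_le_of_le W X Z hXW hZW h

theorem exists_lt_wfRank_eq_mem (W : M.mu) :
    ∀ α ∈ (W : Set Ordinal), ∀ ξ < M.wfRank W,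
      ∃ Z < W, M.wfRank Z = ξ ∧ α ∈ (Z : Set Ordinal) := by
  induction W using WellFoundedLT.induction with
  | _ W IH =>
    intro α hα ξ hξ
    obtain ⟨Z₀, hZ₀W, hZ₀⟩ := IsWellFounded.exists_rel_rank_eq hξ
    suffices ∃ V < W, ξ ≤ M.wfRank V ∧ α ∈ (V : Set Ordinal) by
      obtain ⟨V, hVW, hξV, hαV⟩ := this
      rcases hξV.eq_or_lt with rfl | hξV
      · exact ⟨V, hVW, rfl, hαV⟩
      obtain ⟨Z, hZV, hZ, hαZ⟩ := IH V hVW α hαV ξ hξV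
      exact ⟨Z, hZV.trans hVW, hZ, hαZ⟩
    rcases M.directed_or_isSplit W with hdir | ⟨X₁, X₂, hs⟩
    · obtain ⟨Y, hYW, hαY⟩ := exists_lt_mem hξ.ne_bot hα
      obtain ⟨V, hVW, hYV, hZ₀V⟩ := hdir Y hYW Z₀ hZ₀W
      exact ⟨V, hVW, hZ₀ ▸ wfRank_le_wfRank hZ₀V, hYV hαY⟩
    have hξX₁ : ξ ≤ M.wfRank X₁ := by
      rcases hs.le_or_le Z₀ hZ₀W with h | h
      · exact hZ₀ ▸ wfRank_le_wfRank h
      · exact hZ₀ ▸ (wfRank_le_wfRank h).trans hs.wfRank_eq.ge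
    rcases (hs.union_eq ▸ hα : α ∈ (X₁ : Set Ordinal) ∪ X₂) with h | h
    · exact ⟨X₁, hs.left_lt, hξX₁, h⟩
    · exact ⟨X₂, hs.right_lt, hξX₁.trans hs.wfRank_eq.le, h⟩

theorem mk_lt (X : M.mu) : #(X : Set Ordinal) < Cardinal.lift.{1} κ := by
  rw [← lift_card_otp (M.bddAbove X), Cardinal.lift_lt]
  exact M.mem_small X X.2

theorem wfRank_lt_lift_ord (hκ : κ.IsRegular) (X : M.mu) :
    M.wfRank X < Ordinal.lift.{1} κ.ord := by
  induction X using WellFoundedLT.induction with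
  | _ X IH =>
    rw [wfRank, IsWellFounded.rank_eq, Cardinal.lift_ord]
    refine Ordinal.iSup_lt_of_lt_cof ?_ fun Y => ?_
    · rw [hκ.lift.cof_ord]
      exact M.locSmall X
    · exact (Cardinal.isSuccLimit_ord hκ.lift.aleph0_le).succ_lt (Cardinal.lift_ord κ ▸ IH Y Y.2)

theorem lift_rank (hκ : κ.IsRegular) (X : M.mu) : Ordinal.lift.{1} (M.rank X) = M.wfRank X := by
  obtain ⟨a, ha⟩ := mem_range_lift_of_le (wfRank_lt_lift_ord hκ X).le
  change Ordinal.lift.{1} (olower (M.wfRank X)) = _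
  rw [← ha, olower_lift]

theorem rank_eq_iff (hκ : κ.IsRegular) {X : M.mu} {ξ : Ordinal} :
    M.rank X = ξ ↔ M.wfRank X = Ordinal.lift.{1} ξ := by
  rw [← lift_rank hκ, Ordinal.lift_inj]

theorem rank_lt_ord (hκ : κ.IsRegular) (X : M.mu) : M.rank X < κ.ord := by
  rw [← Ordinal.lift_lt.{1}, lift_rank hκ]
  exact wfRank_lt_lift_ord hκ X

theorem seq_eq_inter_Iio (hκ : κ.IsRegular) {X : M.mu} {α ξ : Ordinal} (hX : M.rank X = ξ)
    (hα : α ∈ (X : Set Ordinal)) : M.seq α ξ = (X : Set Ordinal) ∩ Iio α := by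
  refine subset_antisymm (sUnion_subset ?_) (subset_sUnion_of_mem ⟨X, hX, hα, rfl⟩)
  rintro _ ⟨Y, hY, hαY, rfl⟩
  rw [coherent_of_wfRank_eq (((rank_eq_iff hκ).1 hY).trans ((rank_eq_iff hκ).1 hX).symm) α
    ⟨hαY, hα⟩]

theorem seq_eq_empty {α ξ : Ordinal} (h : ∀ X : M.mu, M.rank X = ξ → α ∉ (X : Set Ordinal)) :
    M.seq α ξ = ∅ :=
  sUnion_eq_empty.2 fun _ ⟨X, hX, hαX, _⟩ => absurd hαX (h X hX)

theorem mk_seq_lt (hκ : κ.IsRegular) (α ξ : Ordinal) : #(M.seq α ξ) < Cardinal.lift.{1} κ := by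
  by_cases h : ∃ X : M.mu, M.rank X = ξ ∧ α ∈ (X : Set Ordinal)
  · obtain ⟨X, hX, hαX⟩ := h
    rw [seq_eq_inter_Iio hκ hX hαX]
    exact (mk_le_mk_of_subset inter_subset_left).trans_lt (mk_lt X)
  · simp only [not_exists, not_and] at h
    rw [seq_eq_empty h, mk_eq_zero]
    exact hκ.lift.pos

theorem otp_seq_lt (hκ : κ.IsRegular) (α ξ : Ordinal) : otp (M.seq α ξ) < κ.ord := by
  have hbdd : BddAbove (M.seq α ξ) :=
    bddAbove_Iio.mono (sUnion_subset fun _ ⟨_, _, _, hS⟩ => hS ▸ inter_subset_right)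
  exact lt_ord.2 (Cardinal.lift_lt.1 ((lift_card_otp hbdd).trans_lt (mk_seq_lt hκ α ξ)))

-- Were all ranks below `ξ`, coherence would give `κ ⊆ ⋃_{η < ξ} μ_η(κ)`: a union of fewer than
-- `κ` sets, each of size `< κ`.
theorem exists_rank_eq (hκ : κ.IsRegular) {ξ : Ordinal} (hξ : ξ < κ.ord) :
    ∃ X : M.mu, M.rank X = ξ := by
  by_contra hne
  have hlt : ∀ X : M.mu, M.rank X < ξ := fun X => lt_of_not_ge fun hle => by
    obtain ⟨Z, hZ⟩ := IsWellFounded.mem_range_rank_of_le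
      (lift_rank hκ X ▸ Ordinal.lift_le.2 hle : Ordinal.lift.{1} ξ ≤ M.wfRank X)
    exact hne ⟨Z, (rank_eq_iff hκ).2 hZ⟩
  have hκκ : κ.ord < (Order.succ κ).ord := ord_lt_ord.2 (Order.lt_succ κ)
  have hcover : Iio κ.ord ⊆ ⋃ η : Iio ξ, M.seq κ.ord η := fun b hb => by
    obtain ⟨W, hbW, hW⟩ := exists_mem_mem (M := M) (hb.trans hκκ) hκκ
    exact mem_iUnion.2 ⟨⟨M.rank W, hlt W⟩, (seq_eq_inter_Iio hκ rfl hW).symm ▸ ⟨hbW, hb⟩⟩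
  have hsmall : #(Iio ξ) < Cardinal.lift.{1} κ := by
    rw [Cardinal.mk_Iio_ordinal, Cardinal.lift_lt]
    exact lt_ord.1 hξ
  have := (mk_le_mk_of_subset hcover).trans_lt
    ((card_iUnion_lt_iff_forall_of_isRegular hκ.lift hsmall).2 fun η => mk_seq_lt hκ _ _)
  rw [Cardinal.mk_Iio_ordinal, card_ord] at this
  exact this.false

theorem exists_rank_eq_mem (hκ : κ.IsRegular) {α ξ : Ordinal} (hα : α < (Order.succ κ).ord)
    (hξ : ξ < κ.ord) : ∃ X : M.mu, M.rank X = ξ ∧ α ∈ (X : Set Ordinal) := by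
  obtain ⟨X₀, hX₀⟩ := exists_rank_eq (M := M) hκ hξ
  obtain ⟨Y, hαY⟩ := exists_mem (M := M) hα
  obtain ⟨W, hX₀W, hYW⟩ := exists_ge_ge X₀ Y
  simp_rw [rank_eq_iff hκ] at hX₀ ⊢
  rcases (hX₀ ▸ wfRank_le_wfRank hX₀W).eq_or_lt with h | h
  · exact ⟨W, h.symm, hYW hαY⟩
  · obtain ⟨Z, -, hZ, hαZ⟩ := exists_lt_wfRank_eq_mem W α (hYW hαY) _ h
    exact ⟨Z, hZ, hαZ⟩

theorem otp_seq_omap (hκ : κ.IsRegular) {X Y : M.mu} (h : M.wfRank X = M.wfRank Y)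
    {α : Ordinal} (hα : α ∈ (X : Set Ordinal)) {η : Ordinal}
    (hη : Ordinal.lift.{1} η < M.wfRank X) :
    otp (M.seq (omap X Y α) η) = otp (M.seq α η) := by
  have hXY := otp_eq_of_wfRank_eq h
  obtain ⟨Z, hZX, hZ, hαZ⟩ := exists_lt_wfRank_eq_mem X α hα _ hη
  obtain ⟨T, -, hT⟩ := exists_image_omap_eq_of_lt h hZX
  have hTZ := wfRank_eq_of_eq_image_omap h hZX hT
  have hαT : omap X Y α ∈ (T : Set Ordinal) := hT ▸ mem_image_of_mem _ hαZ
  rw [seq_eq_inter_Iio hκ ((rank_eq_iff hκ).2 hZ) hαZ,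
    seq_eq_inter_Iio hκ ((rank_eq_iff hκ).2 (hTZ.trans hZ)) hαT, hT,
    ← (omap_strictMonoOn (M.bddAbove X) (M.bddAbove Y) hXY).image_inter_Iio hZX.le hα,
    otp_image_omap (M.bddAbove X) (M.bddAbove Y) hXY (inter_subset_left.trans hZX.le)]

variable (M) in
/-- `f_α ↾ ξ`, extended by `0` from `ξ` on. -/
def fRestrict (α ξ : Ordinal) : Ordinal → Ordinal :=
  fun η => if η < ξ then otp (M.seq α η) else 0

theorem mk_level_lt (hκ : κ.IsRegular) {ξ : Ordinal} (hξ : ξ < κ.ord) :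
    #{t | ∃ α, α < (Order.succ κ).ord ∧ t = M.fRestrict α ξ} < Cardinal.lift.{1} κ := by
  obtain ⟨X₀, hX₀⟩ := exists_rank_eq (M := M) hκ hξ
  have hsub : {t | ∃ α, α < (Order.succ κ).ord ∧ t = M.fRestrict α ξ} ⊆
      (M.fRestrict · ξ) '' X₀ := by
    rintro _ ⟨α, hα, rfl⟩
    obtain ⟨Z, hZ, hαZ⟩ := exists_rank_eq_mem (M := M) hκ hα hξ
    have hZX₀ : M.wfRank Z = M.wfRank X₀ := by rw [← lift_rank hκ, ← lift_rank hκ, hZ, hX₀]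
    refine ⟨omap Z X₀ α, omap_mapsTo (M.bddAbove Z) (M.bddAbove X₀)
      (otp_eq_of_wfRank_eq hZX₀) hαZ, funext fun η => ?_⟩
    simp only [fRestrict]
    split_ifs with hη
    · exact otp_seq_omap hκ hZX₀ hαZ (by rw [← lift_rank hκ, hZ]; exact Ordinal.lift_lt.2 hη)
    · rfl
  exact (mk_le_mk_of_subset hsub).trans_lt (mk_image_le.trans_lt (mk_lt X₀))

theorem fRestrict_ne (hκ : κ.IsRegular) {α β : Ordinal} (hβ : β < (Order.succ κ).ord)
    (hαβ : α < β) : M.fRestrict α κ.ord ≠ M.fRestrict β κ.ord := by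
  obtain ⟨W, hαW, hβW⟩ := exists_mem_mem (M := M) (hαβ.trans hβ) hβ
  intro heq
  have h := congrFun heq (M.rank W)
  simp only [fRestrict, if_pos (rank_lt_ord hκ W), seq_eq_inter_Iio hκ rfl hαW,
    seq_eq_inter_Iio hκ rfl hβW] at h
  exact (strictMonoOn_otp_inter_Iio (M.bddAbove W) hαW hβW hαβ).ne h

theorem lift_succ_le_mk_branches (hκ : κ.IsRegular) :
    Cardinal.lift.{1} (Order.succ κ) ≤
      #{b | ∃ α, α < (Order.succ κ).ord ∧ b = M.fRestrict α κ.ord} := by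
  have hinj : InjOn (M.fRestrict · κ.ord) (Iio (Order.succ κ).ord) := fun α hα β hβ h => by
    rcases lt_trichotomy α β with hlt | rfl | hlt
    · exact absurd h (fRestrict_ne hκ hβ hlt)
    · rfl
    · exact absurd h.symm (fRestrict_ne hκ hα hlt)
  have himage : {b | ∃ α, α < (Order.succ κ).ord ∧ b = M.fRestrict α κ.ord} =
      (M.fRestrict · κ.ord) '' Iio (Order.succ κ).ord := by
    ext b
    exact ⟨fun ⟨α, hα, hb⟩ => ⟨α, hα, hb.symm⟩, fun ⟨α, hα, hb⟩ => ⟨α, hα, hb.symm⟩⟩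
  rw [himage, mk_image_eq_of_injOn _ _ hinj, Cardinal.mk_Iio_ordinal, card_ord]

end TwoCardinal

/-- From a `(κ,κ⁺)`-cardinal one obtains a `κ`-Kurepa tree: the tree of restrictions of the
functions `f_α(ξ) = otp(μ_ξ(α))` is a subtree of `κ^{<κ}` of height `κ`, with levels of
size `< κ` and at least `κ⁺` many branches of length `κ`. -/
theorem kurepa_tree (κ : Cardinal) (hκ : κ.IsRegular) (M : TwoCardinal κ) :
    -- the functions take values below κ, so the tree is a subtree of κ^{<κ}
    (∀ α : Ordinal, α < (Order.succ κ).ord → ∀ ξ : Ordinal, ξ < κ.ord →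
      otp (M.seq α ξ) < κ.ord) ∧
    -- every level (for ξ < κ, so the tree has height κ) has size < κ
    (∀ ξ : Ordinal, ξ < κ.ord →
      #{t : Ordinal → Ordinal | ∃ α : Ordinal, α < (Order.succ κ).ord ∧
        t = fun η => if η < ξ then otp (M.seq α η) else 0} < Cardinal.lift.{1} κ) ∧
    -- there are at least κ⁺ many branches of length κ
    Cardinal.lift.{1} (Order.succ κ) ≤
      #{b : Ordinal → Ordinal | ∃ α : Ordinal, α < (Order.succ κ).ord ∧
        b = fun η => if η < κ.ord then otp (M.seq α η) else 0} :=
  ⟨fun α _ ξ _ => TwoCardinal.otp_seq_lt hκ α ξ, fun _ hξ => TwoCardinal.mk_level_lt hκ hξ,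
    TwoCardinal.lift_succ_le_mk_branches hκ⟩
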